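/- For every finite nonempty set V ⊂ ℝ, every q ∈ (2,4) and every μ > 0, one has 𝓔_{q,V}(μ) < 0 and there exists a ground state of E_{q,V} of mass μ, i.e. some u ∈ H¹_μ(ℝ) with E_{q,V}(u) = 𝓔_{q,V}(μ). -/

import Mathlib

/-!
A Gagliardo–Nirenberg bound `u(x)⁴ ≤ 16 ‖u‖₂² ‖u'‖₂²` makes each vertex term `|u(v)|^q` grow
like `‖u'‖₂^(q/2)`, sublinearly in the kinetic energy `‖u'‖₂²` because `q < 4`; so on the mass
constraint the energy controls the kinetic energy and is bounded below. Mass-preserving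
concentration of a Gaussian at a vertex makes the energy negative.

For a minimizing sequence the kinetic energies are bounded. Along a subsequence the derivatives
converge weakly in `L²` and the values at `0` converge, hence the functions converge pointwise.
The vertex terms pass to the limit, the kinetic energy is weakly lower semicontinuous and, by
Fatou, mass can only be lost. Since the limit has negative energy it is nonzero, and if it had
lost mass, scaling it by `t > 1` back to mass `μ` would multiply its negative energy by at
least `t²`, below the ground-state level.
-/

open MeasureTheory

/-- `u` is (the continuous representative of) an `H¹(ℝ)` function with weak
derivative `u'`: both `u` and `u'` are square-integrable and `u` is a
primitive of `u'`. -/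
def InH1 (u u' : ℝ → ℝ) : Prop :=
  Integrable (fun x => (u x) ^ 2) ∧ Integrable (fun x => (u' x) ^ 2) ∧
    ∀ a b : ℝ, u b - u a = ∫ x in a..b, u' x

/-- The mass `∫_ℝ u²`. -/
noncomputable def mass (u : ℝ → ℝ) : ℝ := ∫ x : ℝ, (u x) ^ 2

/-- The energy `E_{q,V}(u) = (1/2)∫ |u'|² − (1/q)∑_{v ∈ V} |u(v)|^q`,
for a set of vertices `V ⊆ ℝ`. -/
noncomputable def energy (q : ℝ) (V : Set ℝ) (u u' : ℝ → ℝ) : ℝ :=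
  (1 / 2) * (∫ x : ℝ, (u' x) ^ 2) - (1 / q) * ∑' v : V, |u (v : ℝ)| ^ q

/-- The set of energies of `H¹` functions of mass `μ`;
its infimum is the ground-state level `𝓔_{q,V}(μ)`. -/
def levelSet (q : ℝ) (V : Set ℝ) (μ : ℝ) : Set ℝ :=
  {E | ∃ u u' : ℝ → ℝ, InH1 u u' ∧ mass u = μ ∧ E = energy q V u u'}

open Filter Topology Set
open scoped RealInnerProductSpace ENNReal

section Hilbert

variable {H : Type*} [NormedAddCommGroup H] [InnerProductSpace ℝ H]

theorem exists_subseq_tendsto_inner [CompleteSpace H] [TopologicalSpace.SeparableSpace H]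
    {f : ℕ → H} {M : ℝ} (hf : ∀ k, ‖f k‖ ≤ M) :
    ∃ (φ : ℕ → ℕ) (w : H), StrictMono φ ∧
      ∀ g, Tendsto (fun k => ⟪f (φ k), g⟫) atTop (𝓝 ⟪w, g⟫) := by
  let F : ℕ → WeakDual ℝ H := fun k => StrongDual.toWeakDual (InnerProductSpace.toDual ℝ H (f k))
  have hF : ∀ k, F k ∈ WeakDual.toStrongDual ⁻¹' Metric.closedBall 0 M := fun k => by
    simpa [F] using hf k
  obtain ⟨a, -, φ, hφ, hlim⟩ := WeakDual.isSeqCompact_closedBall ℝ H 0 M hF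
  refine ⟨φ, (InnerProductSpace.toDual ℝ H).symm (WeakDual.toStrongDual a), hφ, fun g => ?_⟩
  rw [InnerProductSpace.toDual_symm_apply]
  exact ((WeakDual.eval_continuous g).tendsto a).comp hlim

theorem norm_sq_le_of_tendsto_inner {f : ℕ → H} {w : H} {N : ℝ}
    (hw : Tendsto (fun k => ⟪f k, w⟫) atTop (𝓝 ⟪w, w⟫))
    (hN : Tendsto (fun k => ‖f k‖ ^ 2) atTop (𝓝 N)) : ‖w‖ ^ 2 ≤ N := by
  have hN0 : 0 ≤ N := ge_of_tendsto' hN fun k => by positivity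
  have hle : ⟪w, w⟫ ^ 2 ≤ N * ‖w‖ ^ 2 :=
    le_of_tendsto_of_tendsto' (hw.pow 2) (hN.mul_const _) fun k => by
      rw [← mul_pow]; exact sq_le_sq' (neg_le_of_abs_le (abs_real_inner_le_norm _ _))
        (real_inner_le_norm _ _)
  rw [real_inner_self_eq_norm_sq] at hle
  nlinarith [sq_nonneg ‖w‖]

end Hilbert

section L2

variable {α : Type*} [MeasurableSpace α] {μ : Measure α}

theorem MeasureTheory.L2.norm_sq_eq_integral (f : Lp ℝ 2 μ) : ‖f‖ ^ 2 = ∫ x, f x ^ 2 ∂μ := by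
  rw [← real_inner_self_eq_norm_sq, L2.inner_def]
  simp [sq]

theorem MeasureTheory.MemLp.norm_toLp_sq {f : α → ℝ} (hf : MemLp f 2 μ) :
    ‖hf.toLp f‖ ^ 2 = ∫ x, f x ^ 2 ∂μ := by
  rw [L2.norm_sq_eq_integral]
  exact integral_congr_ae (hf.coeFn_toLp.mono fun x hx => by simp only [hx])

theorem MeasureTheory.MemLp.setIntegral_toLp {f : α → ℝ} (hf : MemLp f 2 μ) (s : Set α) :
    ∫ x in s, hf.toLp f x ∂μ = ∫ x in s, f x ∂μ :=
  integral_congr_ae (ae_restrict_of_ae hf.coeFn_toLp)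

theorem MeasureTheory.MemLp.sq_setIntegral_le {f : α → ℝ} (hf : MemLp f 2 μ) {s : Set α}
    (hs : MeasurableSet s) (hμs : μ s ≠ ∞) :
    (∫ x in s, f x ∂μ) ^ 2 ≤ μ.real s * ∫ x, f x ^ 2 ∂μ := by
  have h := real_inner_mul_inner_self_le (indicatorConstLp 2 hs hμs (1 : ℝ)) (hf.toLp f)
  rwa [L2.inner_indicatorConstLp_one, L2.real_inner_indicatorConstLp_one_indicatorConstLp_one,
    inter_self, real_inner_self_eq_norm_sq, hf.norm_toLp_sq, hf.setIntegral_toLp, ← sq] at h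

theorem exists_subseq_weakly_tendsto_L2 [IsSeparable μ] {f : ℕ → α → ℝ} {M : ℝ}
    (hf : ∀ k, MemLp (f k) 2 μ) (hM : ∀ k, ∫ x, f k x ^ 2 ∂μ ≤ M) :
    ∃ (φ : ℕ → ℕ) (w : α → ℝ), StrictMono φ ∧ MemLp w 2 μ ∧
      (∀ s, MeasurableSet s → μ s ≠ ∞ →
        Tendsto (fun k => ∫ x in s, f (φ k) x ∂μ) atTop (𝓝 (∫ x in s, w x ∂μ))) ∧
      ∀ K, Tendsto (fun k => ∫ x, f (φ k) x ^ 2 ∂μ) atTop (𝓝 K) → ∫ x, w x ^ 2 ∂μ ≤ K := by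
  have : Fact ((2 : ℝ≥0∞) ≠ ∞) := ⟨by norm_num⟩
  have hbound : ∀ k, ‖(hf k).toLp (f k)‖ ≤ √M := fun k => by
    simpa using Real.abs_le_sqrt (((hf k).norm_toLp_sq).trans_le (hM k))
  obtain ⟨φ, w, hφ, hw⟩ := exists_subseq_tendsto_inner hbound
  refine ⟨φ, w, hφ, Lp.memLp w, fun s hs hμs => ?_, fun K hK => ?_⟩
  · have key : ∀ g : Lp ℝ 2 μ, ⟪g, indicatorConstLp 2 hs hμs 1⟫ = ∫ x in s, g x ∂μ := fun g => by
      rw [real_inner_comm, L2.inner_indicatorConstLp_one]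
    simpa only [key, MemLp.setIntegral_toLp] using hw (indicatorConstLp 2 hs hμs 1)
  · rw [← L2.norm_sq_eq_integral]
    exact norm_sq_le_of_tendsto_inner (hw w) (by simpa only [MemLp.norm_toLp_sq] using hK)

theorem integrable_and_integral_le_of_tendsto {f : ℕ → α → ℝ} {g : α → ℝ} {C : ℝ}
    (hf0 : ∀ k x, 0 ≤ f k x) (hf : ∀ k, Integrable (f k) μ) (hC : ∀ k, ∫ x, f k x ∂μ ≤ C)
    (hlim : ∀ᵐ x ∂μ, Tendsto (fun k => f k x) atTop (𝓝 (g x))) :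
    Integrable g μ ∧ ∫ x, g x ∂μ ≤ C := by
  have hg : AEStronglyMeasurable g μ :=
    aestronglyMeasurable_of_tendsto_ae _ (fun k => (hf k).aestronglyMeasurable) hlim
  have hg0 : 0 ≤ᵐ[μ] g := hlim.mono fun x hx => ge_of_tendsto' hx fun k => hf0 k x
  have hC0 : 0 ≤ C := (integral_nonneg (hf0 0)).trans (hC 0)
  have hfatou : ∫⁻ x, ENNReal.ofReal (g x) ∂μ ≤ ENNReal.ofReal C := calc
    ∫⁻ x, ENNReal.ofReal (g x) ∂μ
        = ∫⁻ x, liminf (fun k => ENNReal.ofReal (f k x)) atTop ∂μ :=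
      lintegral_congr_ae (hlim.mono fun x hx =>
        ((ENNReal.continuous_ofReal.tendsto _).comp hx).liminf_eq.symm)
    _ ≤ liminf (fun k => ∫⁻ x, ENNReal.ofReal (f k x) ∂μ) atTop :=
      lintegral_liminf_le' fun k => (hf k).aemeasurable.ennreal_ofReal
    _ ≤ ENNReal.ofReal C := liminf_le_of_frequently_le' (Frequently.of_forall fun k => by
      rw [← ofReal_integral_eq_lintegral_ofReal (hf k) (Eventually.of_forall (hf0 k))]
      exact ENNReal.ofReal_le_ofReal (hC k))
  refine ⟨⟨hg, (hasFiniteIntegral_iff_ofReal hg0).2 (hfatou.trans_lt ENNReal.ofReal_lt_top)⟩, ?_⟩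
  rw [integral_eq_lintegral_of_nonneg_ae hg0 hg]
  exact ENNReal.toReal_le_of_le_ofReal hC0 hfatou

end L2

theorem exists_mul_rpow_le_mul_add {D r ε : ℝ} (hD : 0 ≤ D) (hr0 : 0 ≤ r) (hr : r < 1)
    (hε : 0 < ε) : ∃ C, ∀ X, 0 ≤ X → D * X ^ r ≤ ε * X + C := by
  have hlim : Tendsto (fun X : ℝ => D * X ^ (-(1 - r))) atTop (𝓝 (D * 0)) :=
    (tendsto_rpow_neg_atTop (by linarith)).const_mul D
  obtain ⟨A, hA⟩ := eventually_atTop.1 (hlim.eventually (gt_mem_nhds (by simpa using hε)))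
  refine ⟨D * max A 1 ^ r, fun X hX => ?_⟩
  rcases le_total X (max A 1) with hXA | hXA
  · have : D * X ^ r ≤ D * max A 1 ^ r := by gcongr
    nlinarith
  · have hX1 : 1 ≤ X := (le_max_right _ _).trans hXA
    have hsplit : X ^ r = X ^ (-(1 - r)) * X := by
      rw [← Real.rpow_add_one (by linarith)]; ring_nf
    have : D * X ^ r ≤ ε * X := by
      rw [hsplit, ← mul_assoc]
      exact mul_le_mul_of_nonneg_right (hA X ((le_max_left _ _).trans hXA)).le (by linarith)
    have : 0 ≤ D * max A 1 ^ r := by positivity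
    linarith

theorem exists_pos_mul_rpow_lt {A B p₁ p₂ : ℝ} (hB : 0 < B) (hp : p₁ < p₂) :
    ∃ s > 0, A * s ^ p₂ < B * s ^ p₁ := by
  have hlim : Tendsto (fun s : ℝ => A * s ^ (p₂ - p₁)) (𝓝[>] 0) (𝓝 (A * 0)) := by
    have h := (Real.continuousAt_rpow_const 0 (p₂ - p₁) (Or.inr (by linarith))).tendsto.const_mul A
    rw [Real.zero_rpow (by linarith)] at h
    exact h.mono_left nhdsWithin_le_nhds
  obtain ⟨s, hlt, hs⟩ :=
    ((hlim.eventually (gt_mem_nhds (by simpa using hB))).and self_mem_nhdsWithin).exists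
  refine ⟨s, hs, ?_⟩
  have hsplit : s ^ p₂ = s ^ (p₂ - p₁) * s ^ p₁ := by rw [← Real.rpow_add hs]; ring_nf
  rw [hsplit, ← mul_assoc]
  exact mul_lt_mul_of_pos_right hlt (Real.rpow_pos_of_pos hs _)

theorem exists_mem_Icc_mul_sq_le {u : ℝ → ℝ} (hu : Continuous u)
    (hint : Integrable (fun x => u x ^ 2)) (x : ℝ) {L : ℝ} (hL : 0 < L) :
    ∃ a ∈ Icc x (x + L), L * u a ^ 2 ≤ ∫ y, u y ^ 2 := by
  obtain ⟨a, ha, hmin⟩ := (isCompact_Icc (a := x) (b := x + L)).exists_isMinOn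
    (nonempty_Icc.2 (by linarith)) (hu.pow 2).continuousOn
  refine ⟨a, ha, ?_⟩
  calc L * u a ^ 2 = ∫ _ in Icc x (x + L), u a ^ 2 := by
        rw [setIntegral_const, Real.volume_real_Icc_of_le (by linarith), add_sub_cancel_left,
          smul_eq_mul]
    _ ≤ ∫ y in Icc x (x + L), u y ^ 2 :=
        setIntegral_mono_on (integrableOn_const (by simp)) hint.integrableOn measurableSet_Icc
          fun y hy => hmin hy
    _ ≤ ∫ y, u y ^ 2 := setIntegral_le_integral hint (Eventually.of_forall fun y => sq_nonneg _)

theorem integral_comp_mul_sub (g : ℝ → ℝ) (s d : ℝ) :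
    ∫ x, g (s * x - d) = |s⁻¹| * ∫ x, g x := by
  rw [Measure.integral_comp_mul_left (fun y => g (y - d)) s, integral_sub_right_eq_self,
    smul_eq_mul]

theorem exists_ne_zero_of_mass_ne_zero {u : ℝ → ℝ} (hm : mass u ≠ 0) : ∃ x, u x ≠ 0 := by
  by_contra! h0
  exact hm (by simp [mass, h0])

theorem mass_const_mul (u : ℝ → ℝ) (t : ℝ) : mass (fun x => t * u x) = t ^ 2 * mass u := by
  simp only [mass, mul_pow]; exact integral_const_mul _ _

theorem mass_comp_mul_sub (u : ℝ → ℝ) (s d : ℝ) :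
    mass (fun x => u (s * x - d)) = |s⁻¹| * mass u :=
  integral_comp_mul_sub (fun y => u y ^ 2) s d

namespace InH1

variable {u u' : ℝ → ℝ}

theorem eq_zero_of_not_intervalIntegrable (h : InH1 u u') {a b : ℝ} (hab : a ≤ b)
    (hnot : ¬ IntervalIntegrable u' volume a b) : u a = 0 ∧ u b = 0 := by
  -- The junk value `0` of the non-existent integrals makes `u` constant on `(-∞, a] ∪ {b}`.
  have hconst : ∀ c ≤ a, u c = u b := fun c hc => by
    have hnot' : ¬ IntervalIntegrable u' volume c b := fun hi => hnot (hi.mono_set (by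
      rw [uIcc_of_le hab, uIcc_of_le (hc.trans hab)]; exact Icc_subset_Icc_left hc))
    linarith [h.2.2 c b, intervalIntegral.integral_undef hnot']
  have hb : u b = 0 := by
    have hIO : IntegrableOn (fun _ => u b ^ 2) (Iic a) :=
      h.1.integrableOn.congr_fun (fun c hc => by simp only [hconst c hc]) measurableSet_Iic
    simpa [Real.volume_Iic] using hIO
  exact ⟨(hconst a le_rfl).trans hb, hb⟩

theorem locallyIntegrable_of_ne_zero (h : InH1 u u') {x₀ : ℝ} (hx₀ : u x₀ ≠ 0) :
    LocallyIntegrable u' volume := by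
  have hii : ∀ c, IntervalIntegrable u' volume x₀ c := fun c => by
    by_contra hnot
    rcases le_total x₀ c with hc | hc
    · exact hx₀ (h.eq_zero_of_not_intervalIntegrable hc hnot).1
    · exact hx₀ (h.eq_zero_of_not_intervalIntegrable hc fun hi => hnot hi.symm).2
  refine locallyIntegrable_iff.2 fun k hk => ?_
  obtain ⟨r, hr⟩ := hk.isBounded.subset_closedBall 0
  rw [Real.closedBall_eq_Icc, zero_sub, zero_add] at hr
  have hint := (hii (-r)).symm.trans (hii r)
  rw [intervalIntegrable_iff'] at hint
  exact hint.mono_set (hr.trans Icc_subset_uIcc)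

theorem intervalIntegrable_of_ne_zero (h : InH1 u u') {x₀ : ℝ} (hx₀ : u x₀ ≠ 0) (a b : ℝ) :
    IntervalIntegrable u' volume a b :=
  ((h.locallyIntegrable_of_ne_zero hx₀).integrableOn_isCompact isCompact_uIcc).intervalIntegrable

theorem memLp_two_of_ne_zero (h : InH1 u u') {x₀ : ℝ} (hx₀ : u x₀ ≠ 0) : MemLp u' 2 volume :=
  (memLp_two_iff_integrable_sq (h.locallyIntegrable_of_ne_zero hx₀).aestronglyMeasurable).2 h.2.1

theorem continuous_of_ne_zero (h : InH1 u u') {x₀ : ℝ} (hx₀ : u x₀ ≠ 0) : Continuous u := by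
  have hu : u = fun x => u 0 + ∫ t in (0 : ℝ)..x, u' t := funext fun x => by linarith [h.2.2 0 x]
  rw [hu]
  exact continuous_const.add
    (intervalIntegral.continuous_primitive (h.intervalIntegrable_of_ne_zero hx₀) 0)

theorem mass_pos_of_ne_zero (h : InH1 u u') {x₀ : ℝ} (hx₀ : u x₀ ≠ 0) : 0 < mass u := by
  have hc : Continuous fun x => u x ^ 2 := (h.continuous_of_ne_zero hx₀).pow 2
  refine (integral_pos_iff_support_of_nonneg (fun x => sq_nonneg (u x)) h.1).2 ?_
  exact hc.isOpen_support.measure_pos volume ⟨x₀, pow_ne_zero 2 hx₀⟩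

theorem sq_sub_le (h : InH1 u u') {x₀ : ℝ} (hx₀ : u x₀ ≠ 0) {a b : ℝ} (hab : a ≤ b) :
    (u b - u a) ^ 2 ≤ (b - a) * ∫ x, u' x ^ 2 := by
  rw [h.2.2, intervalIntegral.integral_of_le hab]
  have hcs := (h.memLp_two_of_ne_zero hx₀).sq_setIntegral_le (s := Ioc a b) measurableSet_Ioc
    (by simp)
  rwa [Real.volume_real_Ioc_of_le hab] at hcs

theorem sq_le (h : InH1 u u') (x : ℝ) {L : ℝ} (hL : 0 < L) :
    u x ^ 2 ≤ 2 * (mass u / L + L * ∫ y, u' y ^ 2) := by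
  have hm : 0 ≤ mass u := integral_nonneg fun y => sq_nonneg _
  have hK : 0 ≤ ∫ y, u' y ^ 2 := integral_nonneg fun y => sq_nonneg _
  by_cases hx : u x = 0
  · rw [hx, sq, zero_mul]
    have := div_nonneg hm hL.le
    nlinarith [mul_nonneg hL.le hK]
  obtain ⟨a, ⟨hxa, haL⟩, hua⟩ := exists_mem_Icc_mul_sq_le (h.continuous_of_ne_zero hx) h.1 x hL
  change _ ≤ mass u at hua
  have hua' : u a ^ 2 ≤ mass u / L := by rw [le_div_iff₀ hL]; linarith
  have hcs : (u a - u x) ^ 2 ≤ L * ∫ y, u' y ^ 2 :=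
    (h.sq_sub_le hx hxa).trans (mul_le_mul_of_nonneg_right (by linarith) hK)
  nlinarith [sq_nonneg (u a + (u a - u x))]

theorem pow_four_le (h : InH1 u u') (hm : 0 < mass u) (x : ℝ) :
    u x ^ 4 ≤ 16 * mass u * ∫ y, u' y ^ 2 := by
  set K := ∫ y, u' y ^ 2
  have hK : 0 ≤ K := integral_nonneg fun y => sq_nonneg _
  by_cases hx : u x = 0
  · rw [hx, zero_pow (by norm_num)]
    exact mul_nonneg (by linarith) hK
  have hy : 0 < u x ^ 2 := by positivity
  -- this `L` balances the two terms of `sq_le`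
  have hsq := h.sq_le x (L := 4 * mass u / u x ^ 2) (by positivity)
  have h1 : mass u / (4 * mass u / u x ^ 2) = u x ^ 2 / 4 := by field_simp
  have h2 : u x ^ 2 * (4 * mass u / u x ^ 2 * K) = 4 * mass u * K := by field_simp
  rw [h1] at hsq
  nlinarith

theorem const_mul (h : InH1 u u') (t : ℝ) :
    InH1 (fun x => t * u x) (fun x => t * u' x) := by
  refine ⟨?_, ?_, fun a b => ?_⟩
  · simpa only [mul_pow] using h.1.const_mul (t ^ 2)
  · simpa only [mul_pow] using h.2.1.const_mul (t ^ 2)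
  · rw [intervalIntegral.integral_const_mul, ← h.2.2, mul_sub]

theorem comp_mul_sub (h : InH1 u u') {s : ℝ} (hs : s ≠ 0) (d : ℝ) :
    InH1 (fun x => u (s * x - d)) (fun x => s * u' (s * x - d)) := by
  refine ⟨?_, ?_, fun a b => ?_⟩
  · exact (h.1.comp_sub_right d).comp_mul_left' hs
  · simpa only [mul_pow] using ((h.2.1.comp_sub_right d).comp_mul_left' hs).const_mul (s ^ 2)
  · rw [intervalIntegral.integral_const_mul, intervalIntegral.integral_comp_mul_sub _ hs,
      ← h.2.2, smul_eq_mul, mul_inv_cancel_left₀ hs]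

end InH1

open Real in
theorem inH1_gaussian : InH1 (fun x => exp (-x ^ 2)) (fun x => -2 * x * exp (-x ^ 2)) := by
  have hsq : ∀ x : ℝ, exp (-x ^ 2) ^ 2 = exp (-2 * x ^ 2) := fun x => by
    rw [← exp_nat_mul]; ring_nf
  refine ⟨?_, ?_, fun a b => ?_⟩
  · simpa only [hsq] using integrable_exp_neg_mul_sq two_pos
  · have h := (integrable_rpow_mul_exp_neg_mul_sq two_pos (s := 2) (by norm_num)).const_mul 4
    refine h.congr (Eventually.of_forall fun x => ?_)
    simp only [Real.rpow_two, mul_pow, hsq]; ring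
  · have hderiv : ∀ x, HasDerivAt (fun x => exp (-x ^ 2)) (-2 * x * exp (-x ^ 2)) x := fun x => by
      simpa [mul_comm] using ((hasDerivAt_pow 2 x).neg).exp
    have hcont : Continuous fun x : ℝ => -2 * x * exp (-x ^ 2) := by fun_prop
    rw [intervalIntegral.integral_eq_sub_of_hasDerivAt (fun x _ => hderiv x)
      (hcont.intervalIntegrable _ _)]

open Real in
theorem mass_gaussian : mass (fun x => exp (-x ^ 2)) = √(π / 2) := by
  simp only [mass, ← exp_nat_mul]
  simpa [neg_mul, mul_comm] using integral_gaussian 2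

theorem energy_le_of_mem {q : ℝ} {V : Set ℝ} (hfin : V.Finite) {v : ℝ} (hv : v ∈ V) (hq : 0 ≤ q)
    (u u' : ℝ → ℝ) : energy q V u u' ≤ 1 / 2 * (∫ x, u' x ^ 2) - 1 / q * |u v| ^ q := by
  have : Finite V := hfin.to_subtype
  have hs : Summable fun w : V => |u w| ^ q := Summable.of_finite
  have hle : |u v| ^ q ≤ ∑' w : V, |u w| ^ q := hs.le_tsum ⟨v, hv⟩ fun w _ => by positivity
  unfold energy
  exact sub_le_sub_left (mul_le_mul_of_nonneg_left hle (one_div_nonneg.2 hq)) _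

theorem energy_const_mul_le {q : ℝ} (V : Set ℝ) (hq : 2 ≤ q) {t : ℝ} (ht : 1 ≤ t)
    (u u' : ℝ → ℝ) :
    energy q V (fun x => t * u x) (fun x => t * u' x) ≤ t ^ 2 * energy q V u u' := by
  have htq : t ^ 2 ≤ t ^ q := by
    rw [← Real.rpow_natCast]; exact Real.rpow_le_rpow_of_exponent_le ht (by norm_num [hq])
  have hP : 0 ≤ ∑' v : V, |u v| ^ q := tsum_nonneg fun v => by positivity
  have hpot : ∑' v : V, |t * u v| ^ q = t ^ q * ∑' v : V, |u v| ^ q := by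
    rw [← tsum_mul_left]
    exact tsum_congr fun v => by
      rw [abs_mul, Real.mul_rpow (abs_nonneg _) (abs_nonneg _), abs_of_nonneg (by linarith)]
  have hkin : ∫ x, (t * u' x) ^ 2 = t ^ 2 * ∫ x, u' x ^ 2 := by
    simp_rw [mul_pow]; exact integral_const_mul _ _
  unfold energy
  rw [hpot, hkin]
  have : 0 ≤ 1 / q := by positivity
  nlinarith [mul_le_mul_of_nonneg_right htq hP]

theorem exists_kinetic_div_four_sub_le_energy {q μ : ℝ} {V : Set ℝ} (hfin : V.Finite)
    (hq : 0 < q) (hq4 : q < 4) (hμ : 0 < μ) : ∃ C, ∀ u u' : ℝ → ℝ, InH1 u u' → mass u = μ →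
      (∫ x, u' x ^ 2) / 4 - C ≤ energy q V u u' := by
  have : Fintype V := hfin.fintype
  set D := (1 / q) * Fintype.card V * (16 * μ) ^ (q / 4)
  obtain ⟨C, hC⟩ := exists_mul_rpow_le_mul_add (D := D) (r := q / 4) (ε := 1 / 4) (by positivity)
    (by positivity) (by linarith) (by norm_num)
  refine ⟨C, fun u u' h hm => ?_⟩
  set K := ∫ x, u' x ^ 2
  have hK : 0 ≤ K := integral_nonneg fun x => sq_nonneg _
  have hpt : ∀ v : V, |u v| ^ q ≤ (16 * μ) ^ (q / 4) * K ^ (q / 4) := fun v => by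
    have h4 : |u v| ^ (4 : ℝ) ≤ 16 * μ * K := by
      rw [Real.rpow_ofNat, Even.pow_abs (by decide), ← hm]
      exact h.pow_four_le (hm ▸ hμ) v
    calc |u v| ^ q = (|u v| ^ (4 : ℝ)) ^ (q / 4) := by
          rw [← Real.rpow_mul (abs_nonneg _)]; ring_nf
      _ ≤ (16 * μ * K) ^ (q / 4) := by gcongr
      _ = (16 * μ) ^ (q / 4) * K ^ (q / 4) := Real.mul_rpow (by positivity) hK
  have hsum : (1 / q) * ∑' v : V, |u v| ^ q ≤ D * K ^ (q / 4) := by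
    rw [tsum_fintype]
    calc (1 / q) * ∑ v : V, |u v| ^ q ≤ (1 / q) * ∑ _ : V, (16 * μ) ^ (q / 4) * K ^ (q / 4) := by
          gcongr with v; exact hpt v
      _ = D * K ^ (q / 4) := by simp [D]; ring
  have := hC K hK
  unfold energy
  linarith

open Real in
theorem exists_energy_neg {q μ : ℝ} {V : Set ℝ} (hfin : V.Finite) {v : ℝ} (hv : v ∈ V)
    (hq : 2 < q) (hq4 : q < 4) (hμ : 0 < μ) :
    ∃ u u' : ℝ → ℝ, InH1 u u' ∧ mass u = μ ∧ energy q V u u' < 0 := by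
  set K := ∫ x, (-2 * x * exp (-x ^ 2)) ^ 2
  have hK : 0 ≤ K := integral_nonneg fun x => sq_nonneg _
  set a := μ / √(π / 2)
  have ha : 0 < a := by positivity
  -- The functions `√(a s) exp (-(s (x - v))²)` all have mass `μ`; their kinetic energy is of
  -- order `s²` and their value at `v` of order `s ^ (q / 2)`, which wins as `s → 0` since `q < 4`.
  obtain ⟨s, hs, hlt⟩ := exists_pos_mul_rpow_lt (A := a * K / 2) (B := a ^ (q / 2) / q)
    (p₁ := q / 2) (p₂ := 2) (by positivity) (by linarith)
  set t := √(a * s)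
  have ht : t ^ 2 = a * s := Real.sq_sqrt (by positivity)
  refine ⟨_, _, (inH1_gaussian.comp_mul_sub hs.ne' (s * v)).const_mul t, ?_, ?_⟩
  · rw [mass_const_mul, mass_comp_mul_sub (fun x => exp (-x ^ 2)), mass_gaussian, ht, abs_inv,
      abs_of_pos hs, ← mul_assoc, mul_inv_cancel_right₀ hs.ne']
    exact div_mul_cancel₀ _ (by positivity)
  have hkin : ∫ x, (t * (s * (-2 * (s * x - s * v) * exp (-(s * x - s * v) ^ 2)))) ^ 2
      = a * s ^ 2 * K := by
    simp_rw [mul_pow t, mul_pow s]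
    rw [integral_const_mul, integral_const_mul,
      integral_comp_mul_sub (fun y => (-2 * y * exp (-y ^ 2)) ^ 2), ht, abs_inv, abs_of_pos hs]
    linear_combination (a * s ^ 2 * K) * mul_inv_cancel₀ hs.ne'
  have hpot : |t * exp (-(s * v - s * v) ^ 2)| ^ q = a ^ (q / 2) * s ^ (q / 2) := by
    rw [sub_self, zero_pow two_ne_zero, neg_zero, exp_zero, mul_one, abs_of_nonneg (sqrt_nonneg _),
      sqrt_eq_rpow, ← rpow_mul (by positivity), mul_rpow ha.le hs.le]
    ring_nf
  have hE := energy_le_of_mem (q := q) hfin hv (by linarith)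
    (fun x => t * exp (-(s * x - s * v) ^ 2))
    (fun x => t * (s * (-2 * (s * x - s * v) * exp (-(s * x - s * v) ^ 2))))
  rw [hkin, hpot] at hE
  rw [rpow_two] at hlt
  have : 0 < q := by linarith
  calc _ ≤ _ := hE
    _ = a * K / 2 * s ^ 2 - a ^ (q / 2) / q * s ^ (q / 2) := by ring
    _ < 0 := by linarith

theorem exists_subseq_tendsto_of_bounded {U U' : ℕ → ℝ → ℝ} {μ M : ℝ}
    (hU : ∀ k, InH1 (U k) (U' k)) (hmass : ∀ k, mass (U k) = μ) (hμ : 0 < μ)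
    (hM : ∀ k, ∫ x, U' k x ^ 2 ≤ M) :
    ∃ (φ : ℕ → ℕ) (u u' : ℝ → ℝ), StrictMono φ ∧ InH1 u u' ∧ mass u ≤ μ ∧
      (∀ x, Tendsto (fun k => U (φ k) x) atTop (𝓝 (u x))) ∧
      ∀ K, Tendsto (fun k => ∫ x, U' (φ k) x ^ 2) atTop (𝓝 K) → ∫ x, u' x ^ 2 ≤ K := by
  have hne : ∀ k, ∃ x, U k x ≠ 0 := fun k =>
    exists_ne_zero_of_mass_ne_zero (by rw [hmass]; exact hμ.ne')
  choose x₀ hx₀ using hne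
  have hbdd : ∀ k, U k 0 ∈ Metric.closedBall 0 √(2 * (μ + M)) := fun k => by
    have h := (hU k).sq_le 0 one_pos
    rw [hmass, div_one, one_mul] at h
    simpa using Real.abs_le_sqrt (h.trans (by linarith [hM k] : _ ≤ 2 * (μ + M)))
  obtain ⟨c, -, ψ, hψ, hc⟩ := tendsto_subseq_of_bounded Metric.isBounded_closedBall hbdd
  obtain ⟨φ, w, hφ, hw, hint, hlsc⟩ := exists_subseq_weakly_tendsto_L2
    (f := fun k => U' (ψ k)) (fun k => (hU _).memLp_two_of_ne_zero (hx₀ _)) fun k => hM _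
  have hwii : ∀ a b, IntervalIntegrable w volume a b := fun a b =>
    ((hw.locallyIntegrable one_le_two).integrableOn_isCompact isCompact_uIcc).intervalIntegrable
  set u := fun x => c + ∫ t in (0 : ℝ)..x, w t
  have hpt : ∀ x, Tendsto (fun k => U (ψ (φ k)) x) atTop (𝓝 (u x)) := fun x => by
    have hI : Tendsto (fun k => ∫ t in (0 : ℝ)..x, U' (ψ (φ k)) t) atTop
        (𝓝 (∫ t in (0 : ℝ)..x, w t)) := by
      simpa only [intervalIntegral] using
        (hint _ measurableSet_Ioc (by simp)).sub (hint _ measurableSet_Ioc (by simp))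
    refine ((hc.comp hφ.tendsto_atTop).add hI).congr fun k => ?_
    simp only [Function.comp_apply]
    linarith [(hU (ψ (φ k))).2.2 0 x]
  obtain ⟨hu2, hmu⟩ := integrable_and_integral_le_of_tendsto
    (f := fun k x => U (ψ (φ k)) x ^ 2) (g := fun x => u x ^ 2) (fun k x => sq_nonneg _)
    (fun k => (hU _).1) (fun k => (hmass _).le) (ae_of_all _ fun x => (hpt x).pow 2)
  have hftc : ∀ a b, u b - u a = ∫ t in a..b, w t := fun a b => by
    simp only [u, add_sub_add_left_eq_sub,
      intervalIntegral.integral_interval_sub_left (hwii 0 b) (hwii 0 a)]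
  exact ⟨ψ ∘ φ, u, w, hψ.comp hφ, ⟨hu2, hw.integrable_sq, hftc⟩, hmu, hpt, hlsc⟩

theorem energy_le_of_tendsto {q E : ℝ} {V : Set ℝ} (hfin : V.Finite) (hq : 0 ≤ q)
    {U U' : ℕ → ℝ → ℝ} {u u' : ℝ → ℝ} (hpt : ∀ x, Tendsto (fun k => U k x) atTop (𝓝 (u x)))
    (hE : Tendsto (fun k => energy q V (U k) (U' k)) atTop (𝓝 E))
    (hlsc : ∀ K, Tendsto (fun k => ∫ x, U' k x ^ 2) atTop (𝓝 K) → ∫ x, u' x ^ 2 ≤ K) :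
    energy q V u u' ≤ E := by
  have : Fintype V := hfin.fintype
  have hP : Tendsto (fun k => ∑' v : V, |U k v| ^ q) atTop (𝓝 (∑' v : V, |u v| ^ q)) := by
    simp only [tsum_fintype]
    exact tendsto_finsetSum _ fun v _ => ((hpt v).abs).rpow_const (Or.inr hq)
  have hK := hlsc _ (((hE.add (hP.const_mul (1 / q))).const_mul 2).congr fun k => by
    unfold energy; ring)
  unfold energy
  linarith

theorem mass_eq_of_energy_le_sInf {q μ : ℝ} {V : Set ℝ} (hq : 2 ≤ q) {u u' : ℝ → ℝ}
    (hu : InH1 u u') (hmass : mass u ≤ μ) (hbdd : BddBelow (levelSet q V μ))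
    (hE : energy q V u u' ≤ sInf (levelSet q V μ)) (hneg : sInf (levelSet q V μ) < 0) :
    mass u = μ := by
  obtain ⟨x₀, hx₀⟩ : ∃ x, u x ≠ 0 := by
    by_contra! h0
    have : 0 ≤ energy q V u u' := by
      simp only [energy, h0, abs_zero, Real.zero_rpow (by linarith : q ≠ 0), tsum_zero, mul_zero,
        sub_zero]
      exact mul_nonneg (by norm_num) (integral_nonneg fun x => sq_nonneg _)
    linarith
  have hpos := hu.mass_pos_of_ne_zero hx₀
  by_contra hne
  set t := √(μ / mass u)
  have ht : 1 < t := Real.lt_sqrt_of_sq_lt (by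
    rw [one_pow, one_lt_div hpos]; exact lt_of_le_of_ne hmass hne)
  have ht2 : t ^ 2 * mass u = μ := by
    rw [Real.sq_sqrt (div_nonneg (hpos.le.trans hmass) hpos.le), div_mul_cancel₀ _ hpos.ne']
  have hmem : energy q V (fun x => t * u x) (fun x => t * u' x) ∈ levelSet q V μ :=
    ⟨_, _, hu.const_mul t, by rw [mass_const_mul, ht2], rfl⟩
  have h1 := csInf_le hbdd hmem
  have h2 := energy_const_mul_le V hq ht.le u u'
  have h3 := mul_lt_mul_of_neg_right (one_lt_pow₀ ht two_ne_zero) (hE.trans_lt hneg)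
  linarith

/-- For every finite nonempty `V ⊂ ℝ`, `q ∈ (2,4)` and `μ > 0`, the ground-state
level is strictly negative and a ground state of mass `μ` exists. -/
theorem stmt4 (V : Set ℝ) (hfin : V.Finite) (hne : V.Nonempty) (q μ : ℝ)
    (hq : 2 < q) (hq' : q < 4) (hμ : 0 < μ) :
    sInf (levelSet q V μ) < 0 ∧
      ∃ u u' : ℝ → ℝ, InH1 u u' ∧ mass u = μ ∧
        energy q V u u' = sInf (levelSet q V μ) := by
  obtain ⟨v, hv⟩ := hne
  obtain ⟨C, hC⟩ := exists_kinetic_div_four_sub_le_energy (V := V) hfin (by linarith) hq' hμ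
  obtain ⟨u₀, u₀', h₀, hm₀, hE₀⟩ := exists_energy_neg hfin hv hq hq' hμ
  have hmem₀ : energy q V u₀ u₀' ∈ levelSet q V μ := ⟨u₀, u₀', h₀, hm₀, rfl⟩
  have hbdd : BddBelow (levelSet q V μ) := ⟨-C, by
    rintro _ ⟨u, u', h, hm, rfl⟩
    have hK : 0 ≤ ∫ x, u' x ^ 2 := integral_nonneg fun x => sq_nonneg _
    linarith [hC u u' h hm]⟩
  have hneg : sInf (levelSet q V μ) < 0 := (csInf_le hbdd hmem₀).trans_lt hE₀
  refine ⟨hneg, ?_⟩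
  obtain ⟨E, hanti, hlim, hEmem⟩ := exists_seq_tendsto_sInf ⟨_, hmem₀⟩ hbdd
  choose U U' hU hUm hUE using hEmem
  have hM : ∀ k, ∫ x, U' k x ^ 2 ≤ 4 * (E 0 + C) := fun k => by
    linarith [hC _ _ (hU k) (hUm k), hUE k, hanti (Nat.zero_le k), hUE 0]
  obtain ⟨φ, u, u', hφ, hu, hmu, hpt, hlsc⟩ := exists_subseq_tendsto_of_bounded hU hUm hμ hM
  have hEu : energy q V u u' ≤ sInf (levelSet q V μ) :=
    energy_le_of_tendsto hfin (by linarith) hpt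
      ((hlim.comp hφ.tendsto_atTop).congr fun k => hUE (φ k)) hlsc
  have hmass := mass_eq_of_energy_le_sInf hq.le hu hmu hbdd hEu hneg
  exact ⟨u, u', hu, hmass, le_antisymm hEu (csInf_le hbdd ⟨u, u', hu, hmass, rfl⟩)⟩
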